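/- Every finite-dimensional symplectic vector space admits a cloning process, i.e., for every symplectic vector space (V, ω) there exist b ∈ V, a symplectic vector space (W, σ) with dim W = dim V, r ∈ W, a function f : V → W, and a symplectic linear map φ : V × V × W → V × V × W with φ(x, b, r) = (x, x, f(x)) for all x ∈ V. -/

import Mathlib

/-!
Take the ancilla to be `(V, -ω)`. A linear map `A ⊗ id` of `V ⊗ ℝ³ = V × V × V`, with `A` a
`3 × 3` matrix, then preserves `ω ⊕ ω ⊕ (-ω)` as soon as `A` preserves the indefinite form
`diag(1, 1, -1)`, whatever `ω` is. Since `(1, 1, 1)` is a unit vector for that form, it is the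
first column of some `A ∈ O(2, 1)`, and `A ⊗ id` sends `(x, 0, 0)` to `(x, x, x)`.
-/

namespace LinearMap

theorem SeparatingLeft.neg {R M P N : Type*} [CommSemiring R] [AddCommMonoid M] [Module R M]
    [AddCommMonoid P] [Module R P] [AddCommGroup N] [Module R N] {B : M →ₗ[R] P →ₗ[R] N}
    (hB : B.SeparatingLeft) : (-B).SeparatingLeft :=
  fun x hx => hB x fun y => neg_eq_zero.mp (hx y)

end LinearMap

section Cloning

variable (K : Type*) {M N : Type*} [Field K] [AddCommGroup M] [Module K M]
  [AddCommGroup N] [Module K N]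

/-- `A ⊗ id` for the matrix `A = [[1, 1, 1], [1, -1/2, 1/2], [1, 1/2, 3/2]]`, whose columns
are orthonormal for `diag(1, 1, -1)`. -/
def cloningMap : (M × M × M) →ₗ[K] (M × M × M) where
  toFun u := (u.1 + u.2.1 + u.2.2,
    u.1 - (2⁻¹ : K) • u.2.1 + (2⁻¹ : K) • u.2.2,
    u.1 + (2⁻¹ : K) • u.2.1 + (3 / 2 : K) • u.2.2)
  map_add' u v := by ext <;> simp only [Prod.fst_add, Prod.snd_add, smul_add] <;> abel
  map_smul' c u := by
    ext <;> simp only [Prod.smul_fst, Prod.smul_snd, smul_add, smul_sub, smul_comm c,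
      RingHom.id_apply]

variable {K}

@[simp]
theorem cloningMap_apply (u : M × M × M) : cloningMap K u = (u.1 + u.2.1 + u.2.2,
    u.1 - (2⁻¹ : K) • u.2.1 + (2⁻¹ : K) • u.2.2,
    u.1 + (2⁻¹ : K) • u.2.1 + (3 / 2 : K) • u.2.2) := rfl

theorem cloningMap_clone (x : M) : cloningMap K (x, 0, 0) = (x, x, x) := by
  simp

theorem cloningMap_isometry [NeZero (2 : K)] (B : M →ₗ[K] M →ₗ[K] N) (u v : M × M × M) :
    B (cloningMap K u).1 (cloningMap K v).1 + B (cloningMap K u).2.1 (cloningMap K v).2.1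
        - B (cloningMap K u).2.2 (cloningMap K v).2.2
      = B u.1 v.1 + B u.2.1 v.2.1 - B u.2.2 v.2.2 := by
  simp only [cloningMap_apply, map_add, map_sub, map_smul, LinearMap.add_apply,
    LinearMap.sub_apply, LinearMap.smul_apply]
  match_scalars <;> field_simp <;> ring

end Cloning

theorem every_symplectic_vector_space_admits_cloning_general
    {V : Type*} [AddCommGroup V] [Module ℝ V]
    (ω : V →ₗ[ℝ] V →ₗ[ℝ] ℝ)
    (halt : ∀ v : V, ω v v = 0)
    (hnd : ∀ v : V, (∀ w : V, ω v w = 0) → v = 0) :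
    ∃ (σ : V →ₗ[ℝ] V →ₗ[ℝ] ℝ),
      (∀ w : V, σ w w = 0) ∧
      (∀ w : V, (∀ w' : V, σ w w' = 0) → w = 0) ∧
      ∃ (b : V) (r : V) (f : V → V) (φ : (V × V × V) →ₗ[ℝ] (V × V × V)),
        (∀ u v : V × V × V,
          ω (φ u).1 (φ v).1 + ω (φ u).2.1 (φ v).2.1 + σ (φ u).2.2 (φ v).2.2
            = ω u.1 v.1 + ω u.2.1 v.2.1 + σ u.2.2 v.2.2) ∧
        (∀ x : V, φ (x, b, r) = (x, x, f x)) := by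
  refine ⟨-ω, LinearMap.BilinForm.IsAlt.neg halt, LinearMap.SeparatingLeft.neg hnd,
    0, 0, id, cloningMap ℝ, fun u v => ?_, cloningMap_clone⟩
  simpa only [LinearMap.neg_apply, ← sub_eq_add_neg] using cloningMap_isometry ω u v

/-- Every finite-dimensional symplectic vector space `(V, ω)` admits a cloning process:
there exist `b ∈ V`, a symplectic vector space `(W, σ)` with `dim W = dim V` (we may take
`W = V` itself, so the dimension condition holds automatically), `r ∈ W`, a function
`f : V → W`, and a symplectic linear map `φ : V × V × W → V × V × W` (for the
direct-sum form `ω ⊕ ω ⊕ σ`) with `φ (x, b, r) = (x, x, f x)` for all `x ∈ V`. -/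
theorem every_symplectic_vector_space_admits_cloning
    {V : Type*} [AddCommGroup V] [Module ℝ V] [FiniteDimensional ℝ V]
    (ω : V →ₗ[ℝ] V →ₗ[ℝ] ℝ)
    (halt : ∀ v : V, ω v v = 0)
    (hnd : ∀ v : V, (∀ w : V, ω v w = 0) → v = 0) :
    ∃ (σ : V →ₗ[ℝ] V →ₗ[ℝ] ℝ),
      (∀ w : V, σ w w = 0) ∧
      (∀ w : V, (∀ w' : V, σ w w' = 0) → w = 0) ∧
      ∃ (b : V) (r : V) (f : V → V) (φ : (V × V × V) →ₗ[ℝ] (V × V × V)),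
        (∀ u v : V × V × V,
          ω (φ u).1 (φ v).1 + ω (φ u).2.1 (φ v).2.1 + σ (φ u).2.2 (φ v).2.2
            = ω u.1 v.1 + ω u.2.1 v.2.1 + σ u.2.2 v.2.2) ∧
        (∀ x : V, φ (x, b, r) = (x, x, f x)) :=
  every_symplectic_vector_space_admits_cloning_general ω halt hnd
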